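/- arXiv:1608.03165 — 6 statements merged into one kernel-verified Lean document; each statement's English description precedes it below -/
import Mathlib

section
/- (Weak duality for the joint source-channel coding LP.) Let $\mathcal{S}, \mathcal{X}, \mathcal{Y}, \widehat{\mathcal{S}}$ be finite sets, $P_S$ a probability distribution on $\mathcal{S}$, $P_{Y|X}$ a stochastic kernel, and $\kappa : \mathcal{S}\times\mathcal{X}\times\mathcal{Y}\times\widehat{\mathcal{S}} \to \mathbb{R}$. Suppose $\gamma^a : \mathcal{S} \to \mathbb{R}$, $\gamma^b : \mathcal{Y} \to \mathbb{R}$, $\lambda^a : \mathcal{S}\times\widehat{\mathcal{S}}\times\mathcal{Y} \to \mathbb{R}$, $\lambda^b : \mathcal{X}\times\mathcal{S}\times\mathcal{Y} \to \mathbb{R}$ satisfy: (D1) $\gamma^a(s) \le \sum_y \lambda^b(x,s,y)$ for all $x,s$; (D2) $\gamma^b(y) \le \sum_s \lambda^a(s,\widehat{s},y)$ for all $\widehat{s},y$; (D3) $\lambda^a(s,\widehat{s},y) + \lambda^b(x,s,y) \le \kappa(s,x,y,\widehat{s}) P_S(s) P_{Y|X}(y|x)$ for all $s,x,y,\widehat{s}$.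 Then for every pair of functions $f : \mathcal{S} \to \mathcal{X}$, $g : \mathcal{Y} \to \widehat{\mathcal{S}}$, $$\sum_{s,y} \kappa(s, f(s), y, g(y)) P_S(s) P_{Y|X}(y|f(s)) \ge \sum_s \gamma^a(s) + \sum_y \gamma^b(y).$$ -/
open Finset

theorem sum_add_sum_le_sum_sum_add {ι κ M : Type*} [Fintype ι] [Fintype κ]
    [AddCommMonoid M] [PartialOrder M] [IsOrderedAddMonoid M]
    {a : ι → M} {b : κ → M} {c d : ι → κ → M}
    (ha : ∀ i, a i ≤ ∑ j, d i j) (hb : ∀ j, b j ≤ ∑ i, c i j) :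
    ∑ i, a i + ∑ j, b j ≤ ∑ i, ∑ j, (c i j + d i j) :=
  calc ∑ i, a i + ∑ j, b j
      ≤ ∑ i, ∑ j, d i j + ∑ j, ∑ i, c i j :=
        add_le_add (sum_le_sum fun i _ => ha i) (sum_le_sum fun j _ => hb j)
    _ = ∑ i, ∑ j, (c i j + d i j) := by
        rw [sum_comm (s := univ) (t := univ) (f := fun j i => c i j), add_comm,
          ← sum_add_distrib]
        exact sum_congr rfl fun i _ => sum_add_distrib.symm

theorem lp_weak_duality_general
    {S X Y Sh : Type*} [Fintype S] [Fintype Y]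
    (PS : S → ℝ)
    (PYX : X → Y → ℝ)
    (κ : S → X → Y → Sh → ℝ)
    (γa : S → ℝ) (γb : Y → ℝ) (la : S → Sh → Y → ℝ) (lb : X → S → Y → ℝ)
    (hD1 : ∀ x s, γa s ≤ ∑ y, lb x s y)
    (hD2 : ∀ sh y, γb y ≤ ∑ s, la s sh y)
    (hD3 : ∀ s x y sh, la s sh y + lb x s y ≤ κ s x y sh * PS s * PYX x y) :
    ∀ (f : S → X) (g : Y → Sh),
      (∑ s, ∑ y, κ s (f s) y (g y) * PS s * PYX (f s) y) ≥
        (∑ s, γa s) + ∑ y, γb y := by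
  intro f g
  calc (∑ s, γa s) + ∑ y, γb y
      ≤ ∑ s, ∑ y, (la s (g y) y + lb (f s) s y) :=
        sum_add_sum_le_sum_sum_add (fun s => hD1 (f s) s) (fun y => hD2 (g y) y)
    _ ≤ ∑ s, ∑ y, κ s (f s) y (g y) * PS s * PYX (f s) y :=
        sum_le_sum fun s _ => sum_le_sum fun y _ => hD3 s (f s) y (g y)

theorem lp_weak_duality
    {S X Y Sh : Type*} [Fintype S] [Fintype X] [Fintype Y] [Fintype Sh]
    (PS : S → ℝ) (hPS : ∀ s, 0 ≤ PS s) (hPS1 : ∑ s, PS s = 1)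
    (PYX : X → Y → ℝ) (hPYX : ∀ x y, 0 ≤ PYX x y) (hPYX1 : ∀ x, ∑ y, PYX x y = 1)
    (κ : S → X → Y → Sh → ℝ)
    (γa : S → ℝ) (γb : Y → ℝ) (la : S → Sh → Y → ℝ) (lb : X → S → Y → ℝ)
    (hD1 : ∀ x s, γa s ≤ ∑ y, lb x s y)
    (hD2 : ∀ sh y, γb y ≤ ∑ s, la s sh y)
    (hD3 : ∀ s x y sh, la s sh y + lb x s y ≤ κ s x y sh * PS s * PYX x y) :
    ∀ (f : S → X) (g : Y → Sh),
      (∑ s, ∑ y, κ s (f s) y (g y) * PS s * PYX (f s) y) ≥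
        (∑ s, γa s) + ∑ y, γb y :=
  lp_weak_duality_general PS PYX κ γa γb la lb hD1 hD2 hD3
end

section
/- (Strong converse for the BSC via the LP dual bound.) Fix $0 < \epsilon < 1/2$ and $R > 1 - H_2(\epsilon)$ where $H_2(\epsilon) = -\epsilon\log_2\epsilon - (1-\epsilon)\log_2(1-\epsilon)$. For each $n$, let $M_n = \lceil 2^{nR} \rceil$ and consider the memoryless BSC of blocklength $n$ with crossover probability $\epsilon$, uniform source on $\{1,\dots,M_n\}$. Let $P_e(n)$ denote the infimum over all encoder/decoder pairs $(f,g)$ of the error probability $\Pr[S \ne g(Y)]$. Then $\lim_{n \to \infty} P_e(n) = 1$. -/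
/-!
Fix `δ > 0`. By Chebyshev's inequality a transmitted codeword arrives at Hamming distance below
`n(ε - δ)` with probability at most `ε(1-ε)/(nδ²)`; every single output at distance at least
`n(ε - δ)` has probability at most `(1-ε)ⁿ (ε/(1-ε))^{n(ε-δ)} = 2^{-n(H₂(ε) - δ log₂((1-ε)/ε))}`.
The decoding regions partition the `2ⁿ` outputs, so the average probability of correct decoding is
at most `ε(1-ε)/(nδ²) + 2^{n(1 - H₂(ε) + δ log₂((1-ε)/ε))} / M`, and for `δ` small enough the last
term decays exponentially because `M ≥ 2^{nR}` with `R > 1 - H₂(ε)`.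
-/

open Finset Filter Topology Real

namespace BSC

variable {n M : ℕ} {ε : ℝ}

theorem sum_hammingDist_eq_sum_choose {β : Type*} [AddCommMonoid β] (x : Fin n → Bool)
    (F : ℕ → β) :
    ∑ y : Fin n → Bool, F (hammingDist x y) = ∑ k ∈ range (n + 1), n.choose k • F k := by
  have hflip : ∑ y : Fin n → Bool, F (hammingDist x y)
      = ∑ s ∈ (univ : Finset (Fin n)).powerset, F #s := by
    refine sum_nbij' (fun y => ({i | x i ≠ y i} : Finset (Fin n)))
      (fun s i => if i ∈ s then !x i else x i) (by simp) (by simp) (fun y _ => ?_) (fun s _ => ?_) (fun y _ => rfl)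
    · funext i
      cases hx : x i <;> cases hy : y i <;> simp [hx, hy]
    · ext i
      by_cases h : i ∈ s <;> cases x i <;> simp [h]
  rw [hflip, sum_powerset_apply_card, card_univ, Fintype.card_fin]

theorem binomial_variance (p : ℝ) :
    ∑ k ∈ range (n + 1), ((n : ℝ) * p - k) ^ 2 * (n.choose k * (p ^ k * (1 - p) ^ (n - k)))
      = n * (p * (1 - p)) := by
  have h := congrArg (Polynomial.eval p) (bernsteinPolynomial.variance ℝ n)
  simpa [bernsteinPolynomial, Polynomial.eval_finsetSum, mul_assoc, mul_comm, mul_left_comm]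
    using h

noncomputable def transitionProb (ε : ℝ) (x y : Fin n → Bool) : ℝ :=
  ε ^ hammingDist x y * (1 - ε) ^ (n - hammingDist x y)

noncomputable def errorProb (ε : ℝ) (f : Fin M → Fin n → Bool) (g : (Fin n → Bool) → Fin M) :
    ℝ :=
  1 / (M : ℝ) * ∑ s : Fin M, ∑ y : Fin n → Bool, if g y ≠ s then transitionProb ε (f s) y else 0

theorem transitionProb_nonneg (h0 : 0 ≤ ε) (h1 : ε ≤ 1) (x y : Fin n → Bool) :
    0 ≤ transitionProb ε x y :=
  mul_nonneg (pow_nonneg h0 _) (pow_nonneg (sub_nonneg.2 h1) _)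

theorem sum_transitionProb (x : Fin n → Bool) : ∑ y, transitionProb ε x y = 1 := by
  simp only [transitionProb]
  rw [sum_hammingDist_eq_sum_choose x (fun k => ε ^ k * (1 - ε) ^ (n - k))]
  simpa [nsmul_eq_mul, mul_comm] using (add_pow ε (1 - ε) n).symm

theorem sq_mul_sum_transitionProb_hammingDist_lt_le {δ : ℝ} (hδ : 0 ≤ δ) (h0 : 0 ≤ ε)
    (h1 : ε ≤ 1) (x : Fin n → Bool) :
    (n * δ) ^ 2 * ∑ y with (hammingDist x y : ℝ) < n * (ε - δ), transitionProb ε x y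
      ≤ n * (ε * (1 - ε)) := by
  simp only [sum_filter, transitionProb]
  rw [sum_hammingDist_eq_sum_choose x
    (fun k => if (k : ℝ) < n * (ε - δ) then ε ^ k * (1 - ε) ^ (n - k) else 0), mul_sum,
    ← binomial_variance ε]
  refine sum_le_sum fun k _ => ?_
  have hterm : 0 ≤ (n.choose k : ℝ) * (ε ^ k * (1 - ε) ^ (n - k)) := by
    have := sub_nonneg.2 h1
    positivity
  rw [nsmul_eq_mul]
  split_ifs with hk
  · have hsq : (n * δ) ^ 2 ≤ ((n : ℝ) * ε - k) ^ 2 :=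
      pow_le_pow_left₀ (by positivity) (by linarith) 2
    exact mul_le_mul_of_nonneg_right hsq hterm
  · simpa using mul_nonneg (sq_nonneg _) hterm

theorem transitionProb_le_of_le_hammingDist (h0 : 0 < ε) (h : ε ≤ 1 / 2) {t : ℝ}
    {x y : Fin n → Bool} (ht : t ≤ hammingDist x y) :
    transitionProb ε x y ≤ (1 - ε) ^ n * (ε / (1 - ε)) ^ t := by
  have h1 : 0 < 1 - ε := by linarith
  have hd : hammingDist x y ≤ n := by simpa using hammingDist_le_card_fintype (x := x) (y := y)
  have hsplit : (1 - ε) ^ n = (1 - ε) ^ (n - hammingDist x y) * (1 - ε) ^ hammingDist x y := by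
    rw [← pow_add, Nat.sub_add_cancel hd]
  calc transitionProb ε x y = (1 - ε) ^ n * (ε / (1 - ε)) ^ (hammingDist x y : ℝ) := by
        rw [rpow_natCast, div_pow, hsplit, transitionProb]
        field_simp
    _ ≤ (1 - ε) ^ n * (ε / (1 - ε)) ^ t := by
        refine mul_le_mul_of_nonneg_left ?_ (by positivity)
        exact rpow_le_rpow_of_exponent_ge (div_pos h0 h1) ((div_le_one h1).2 (by linarith)) ht

theorem sum_transitionProb_decode_le (h0 : 0 < ε) (h : ε ≤ 1 / 2) (f : Fin M → Fin n → Bool)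
    (g : (Fin n → Bool) → Fin M) {t τ : ℝ}
    (htail : ∀ x : Fin n → Bool, ∑ y with (hammingDist x y : ℝ) < t, transitionProb ε x y ≤ τ) :
    ∑ y, transitionProb ε (f (g y)) y ≤ M * τ + 2 ^ n * ((1 - ε) ^ n * (ε / (1 - ε)) ^ t) := by
  set P := fun x y => if (hammingDist x y : ℝ) < t then transitionProb ε x y else 0
  have hP : ∀ x y, 0 ≤ P x y := fun x y => by
    unfold P; split_ifs
    exacts [transitionProb_nonneg h0.le (by linarith) x y, le_rfl]
  have hT : 0 ≤ (1 - ε) ^ n * (ε / (1 - ε)) ^ t := by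
    have : 0 < 1 - ε := by linarith
    positivity
  have hpoint : ∀ y, transitionProb ε (f (g y)) y
      ≤ ∑ s, P (f s) y + (1 - ε) ^ n * (ε / (1 - ε)) ^ t := fun y => by
    have hsingle : P (f (g y)) y ≤ ∑ s, P (f s) y :=
      single_le_sum (f := fun s => P (f s) y) (fun s _ => hP _ _) (mem_univ (g y))
    by_cases hd : (hammingDist (f (g y)) y : ℝ) < t
    · have : P (f (g y)) y = transitionProb ε (f (g y)) y := if_pos hd
      linarith
    · have := transitionProb_le_of_le_hammingDist h0 h (not_lt.1 hd)
      linarith [sum_nonneg fun s (_ : s ∈ univ) => hP (f s) y]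
  calc ∑ y, transitionProb ε (f (g y)) y
      ≤ ∑ y, (∑ s, P (f s) y + (1 - ε) ^ n * (ε / (1 - ε)) ^ t) := sum_le_sum fun y _ => hpoint y
    _ = ∑ s, ∑ y with (hammingDist (f s) y : ℝ) < t, transitionProb ε (f s) y
          + 2 ^ n * ((1 - ε) ^ n * (ε / (1 - ε)) ^ t) := by
        rw [sum_add_distrib, sum_comm]
        simp [P, sum_filter]
    _ ≤ M * τ + 2 ^ n * ((1 - ε) ^ n * (ε / (1 - ε)) ^ t) := by
        gcongr
        simpa using sum_le_sum fun s (_ : s ∈ univ) => htail (f s)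

theorem errorProb_eq_one_sub (hM : 0 < M) (f : Fin M → Fin n → Bool)
    (g : (Fin n → Bool) → Fin M) :
    errorProb ε f g = 1 - (∑ y, transitionProb ε (f (g y)) y) / M := by
  have hsplit : ∀ s y, (if g y ≠ s then transitionProb ε (f s) y else 0)
      = transitionProb ε (f s) y - if g y = s then transitionProb ε (f s) y else 0 := by
    intro s y
    split_ifs <;> simp_all
  have hsuccess : ∑ s, ∑ y, (if g y = s then transitionProb ε (f s) y else 0)
      = ∑ y, transitionProb ε (f (g y)) y := by
    rw [sum_comm]
    exact sum_congr rfl fun y _ => Fintype.sum_ite_eq _ _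
  simp only [errorProb, hsplit, sum_sub_distrib, sum_transitionProb, hsuccess, sum_const,
    card_univ, Fintype.card_fin, nsmul_eq_mul, mul_one]
  field_simp

theorem errorProb_le_one (hM : 0 < M) (h0 : 0 ≤ ε) (h1 : ε ≤ 1) (f : Fin M → Fin n → Bool)
    (g : (Fin n → Bool) → Fin M) : errorProb ε f g ≤ 1 := by
  rw [errorProb_eq_one_sub hM, sub_le_self_iff]
  exact div_nonneg (sum_nonneg fun y _ => transitionProb_nonneg h0 h1 _ _) M.cast_nonneg

def errorProbs (ε : ℝ) (n M : ℕ) : Set ℝ :=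
  {e | ∃ (f : Fin M → Fin n → Bool) (g : (Fin n → Bool) → Fin M), e = errorProb ε f g}

theorem sInf_errorProbs_mem_Icc (hM : 0 < M) (h0 : 0 ≤ ε) (h1 : ε ≤ 1) {L : ℝ}
    (hL : ∀ (f : Fin M → Fin n → Bool) g, L ≤ errorProb ε f g) :
    sInf (errorProbs ε n M) ∈ Set.Icc L 1 := by
  have hlower : L ∈ lowerBounds (errorProbs ε n M) := by
    rintro _ ⟨f, g, rfl⟩
    exact hL f g
  have hmem : errorProb ε (fun _ _ => false) (fun _ => ⟨0, hM⟩) ∈ errorProbs ε n M := ⟨_, _, rfl⟩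
  exact ⟨le_csInf ⟨_, hmem⟩ hlower,
    (csInf_le ⟨L, hlower⟩ hmem).trans (errorProb_le_one hM h0 h1 _ _)⟩

theorem two_mul_one_sub_mul_rpow (h0 : 0 < ε) (h1 : ε < 1) (a : ℝ) :
    2 * (1 - ε) * (ε / (1 - ε)) ^ a
      = (2 : ℝ) ^ (1 + logb 2 (1 - ε) + a * (logb 2 ε - logb 2 (1 - ε))) := by
  have h1' : 0 < 1 - ε := by linarith
  rw [rpow_add two_pos, rpow_add two_pos, rpow_one, rpow_logb two_pos (by norm_num) h1',
    mul_comm a, rpow_mul zero_le_two, rpow_sub two_pos, rpow_logb two_pos (by norm_num) h0,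
    rpow_logb two_pos (by norm_num) h1']

theorem le_errorProb (h0 : 0 < ε) (h : ε ≤ 1 / 2) {δ R : ℝ} (hδ : 0 < δ) (hn : 0 < n)
    (hM : (2 : ℝ) ^ (n * R) ≤ M) (f : Fin M → Fin n → Bool) (g : (Fin n → Bool) → Fin M) :
    1 - ε * (1 - ε) / δ ^ 2 / n - (2 * (1 - ε) * (ε / (1 - ε)) ^ (ε - δ) / 2 ^ R) ^ n
      ≤ errorProb ε f g := by
  have h1 : 0 < 1 - ε := by linarith
  have hn' : (0 : ℝ) < n := Nat.cast_pos.2 hn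
  have hMpos : (0 : ℝ) < M := (rpow_pos_of_pos two_pos _).trans_le hM
  have htail : ∀ x : Fin n → Bool, ∑ y with (hammingDist x y : ℝ) < n * (ε - δ),
      transitionProb ε x y ≤ ε * (1 - ε) / δ ^ 2 / n := fun x => by
    have := sq_mul_sum_transitionProb_hammingDist_lt_le hδ.le h0.le (by linarith) x
    rw [div_div, le_div_iff₀ (by positivity)]
    nlinarith
  have hsuccess := sum_transitionProb_decode_le h0 h f g htail
  have hcodewords : 2 ^ n * ((1 - ε) ^ n * (ε / (1 - ε)) ^ (n * (ε - δ)))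
      = (2 * (1 - ε) * (ε / (1 - ε)) ^ (ε - δ)) ^ n := by
    rw [mul_comm (n : ℝ), rpow_mul_natCast (div_pos h0 h1).le, mul_pow, mul_pow, mul_assoc]
  have hM' : (2 ^ R) ^ n ≤ (M : ℝ) := by rwa [mul_comm, rpow_mul_natCast zero_le_two] at hM
  rw [hcodewords] at hsuccess
  have hdenom : (2 * (1 - ε) * (ε / (1 - ε)) ^ (ε - δ)) ^ n / M
      ≤ (2 * (1 - ε) * (ε / (1 - ε)) ^ (ε - δ)) ^ n / (2 ^ R) ^ n :=
    div_le_div_of_nonneg_left (by positivity) (by positivity) hM'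
  have hsuccess' : (∑ y, transitionProb ε (f (g y)) y) / M
      ≤ ε * (1 - ε) / δ ^ 2 / n + (2 * (1 - ε) * (ε / (1 - ε)) ^ (ε - δ)) ^ n / M := by
    rw [div_le_iff₀ hMpos, add_mul, div_mul_cancel₀ _ hMpos.ne']
    linarith
  rw [errorProb_eq_one_sub (Nat.cast_pos.1 hMpos), div_pow]
  linarith

end BSC

open BSC

theorem bsc_strong_converse (ε R : ℝ) (hε0 : 0 < ε) (hε : ε < 1/2)
    (hR : R > 1 - (-(ε * Real.logb 2 ε) - (1 - ε) * Real.logb 2 (1 - ε)))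
    (M : ℕ → ℕ) (hM : ∀ n, M n = ⌈(2:ℝ) ^ ((n : ℝ) * R)⌉₊)
    (Pe : ℕ → ℝ)
    (hPe : ∀ n, Pe n = sInf { e : ℝ |
      ∃ (f : Fin (M n) → (Fin n → Bool)) (g : (Fin n → Bool) → Fin (M n)),
        e = (1 / (M n : ℝ)) * ∑ s : Fin (M n), ∑ y : Fin n → Bool,
          (if g y ≠ s then
            ε ^ (hammingDist (f s) y) * (1 - ε) ^ (n - hammingDist (f s) y)
          else 0) }) :
    Filter.Tendsto Pe Filter.atTop (nhds 1) := by
  set κ := R - (1 - (-(ε * logb 2 ε) - (1 - ε) * logb 2 (1 - ε))) with hκ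
  set c := logb 2 (1 - ε) - logb 2 ε
  have hc : 0 < c := sub_pos.2 (logb_lt_logb one_lt_two hε0 (by linarith))
  set δ := κ / (2 * c)
  have hδ : 0 < δ := div_pos (by linarith) (by positivity)
  have hδc : δ * c = κ / 2 := by unfold δ; field_simp
  have hrate : 2 * (1 - ε) * (ε / (1 - ε)) ^ (ε - δ) / 2 ^ R = (2 : ℝ) ^ (-(κ / 2)) := by
    rw [two_mul_one_sub_mul_rpow hε0 (by linarith), ← rpow_sub two_pos]
    congr 1
    linear_combination hδc - hκ
  have hbounds : ∀ n : ℕ, 0 < n →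
      Pe n ∈ Set.Icc (1 - ε * (1 - ε) / δ ^ 2 / n - ((2 : ℝ) ^ (-(κ / 2))) ^ n) 1 := by
    intro n hn
    have hMn : (2 : ℝ) ^ (n * R) ≤ M n := hM n ▸ Nat.le_ceil _
    have hMpos : 0 < M n := Nat.cast_pos.1 ((rpow_pos_of_pos two_pos _).trans_le hMn)
    exact hPe n ▸ sInf_errorProbs_mem_Icc hMpos hε0.le (by linarith)
      fun f g => hrate ▸ le_errorProb hε0 hε.le hδ hn hMn f g
  have hlim : Tendsto (fun n : ℕ => 1 - ε * (1 - ε) / δ ^ 2 / n - ((2 : ℝ) ^ (-(κ / 2))) ^ n)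
      atTop (𝓝 1) := by
    have hr : (2 : ℝ) ^ (-(κ / 2)) < 1 := rpow_lt_one_of_one_lt_of_neg one_lt_two (by linarith)
    simpa using ((tendsto_const_nhds (x := (1 : ℝ))).sub
      (tendsto_const_div_atTop_nhds_zero_nat _)).sub
      (tendsto_pow_atTop_nhds_zero_of_lt_one (by positivity) hr)
  refine tendsto_of_tendsto_of_tendsto_of_le_of_le' hlim tendsto_const_nhds ?_ ?_ <;>
    filter_upwards [eventually_gt_atTop 0] with n hn
  exacts [(hbounds n hn).1, (hbounds n hn).2]
end

section
/- (Positivity of the LP optimum for nondegenerate distortion.) Let $\mathcal{S} = \widehat{\mathcal{S}}$ with $|\mathcal{S}| \ge 2$, and suppose $P_S(s) > 0$ for all $s$, $P_{Y|X}(y|x) > 0$ for all $x,y$, and $\kappa(s,x,y,\widehat{s}) = d(s,\widehat{s})$ where $d \ge 0$ and $d(s,\widehat{s}) = 0$ iff $s = \widehat{s}$. Then the optimal value of the LP relaxation is strictly positive; in particular, no feasible point $(Q_{X|S}, Q_{\widehat{S}|Y}, W)$ of the LP has objective value $\sum_{s,x,y,\widehat{s}} d(s,\widehat{s}) P_S(s)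 P_{Y|X}(y|x) W(s,x,y,\widehat{s}) = 0$. -/
/-!
A feasible point has objective value zero only if `W(s, x, y, ŝ) = 0` whenever `s ≠ ŝ`; but
`∑ₓ W(s, x, y, ŝ) = Q(ŝ | y)`, so the off-diagonal mass of `W` is `|Y| (|S| - 1)` at every
feasible point. As the off-diagonal cost coefficients `d(s, ŝ) P_S(s) P_{Y|X}(y | x)` are
bounded below by some `m > 0`, the objective is at least `m |Y| (|S| - 1) > 0` on the whole
feasible set, which is nonempty since the uniform distributions with `W = Q_{X|S} Q_{Ŝ|Y}` are
feasible.
-/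

open Finset

lemma exists_pos_le_of_pos {ι : Type*} [Finite ι] (f : ι → ℝ) :
    ∃ m > 0, ∀ i, 0 < f i → m ≤ f i := by
  by_cases h : ∃ i, 0 < f i
  · obtain ⟨i, hi⟩ := h
    have : Nonempty {i // 0 < f i} := ⟨⟨i, hi⟩⟩
    obtain ⟨⟨i₀, hi₀⟩, hmin⟩ := Finite.exists_min fun j : {i // 0 < f i} => f j
    exact ⟨f i₀, hi₀, fun j hj => hmin ⟨j, hj⟩⟩
  · push Not at h
    exact ⟨1, one_pos, fun i hi => absurd hi (h i).not_gt⟩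

section LP

variable (S X Y : Type*) [Fintype S] [Fintype X]

/-- The feasible set of the LP relaxation, with points `(Q_{X|S}, Q_{Ŝ|Y}, W)`. -/
def lpFeasible : Set ((S → X → ℝ) × (Y → S → ℝ) × (S → X → Y → S → ℝ)) :=
  {p | (∀ s x, 0 ≤ p.1 s x) ∧ (∀ y sh, 0 ≤ p.2.1 y sh) ∧
        (∀ s x y sh, 0 ≤ p.2.2 s x y sh) ∧
        (∀ s, ∑ x, p.1 s x = 1) ∧ (∀ y, ∑ sh, p.2.1 y sh = 1) ∧
        (∀ s sh y, ∑ x, p.2.2 s x y sh = p.2.1 y sh) ∧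
        (∀ x s y, ∑ sh, p.2.2 s x y sh = p.1 s x) ∧
        (∀ s x y sh, p.1 s x + p.2.1 y sh - p.2.2 s x y sh ≤ 1)}

lemma uniform_mem_lpFeasible [Nonempty S] [Nonempty X] :
    (fun _ _ => (Fintype.card X : ℝ)⁻¹, fun _ _ => (Fintype.card S : ℝ)⁻¹,
      fun _ _ _ _ => (Fintype.card X : ℝ)⁻¹ * (Fintype.card S : ℝ)⁻¹) ∈
      lpFeasible S X Y := by
  have hX : (Fintype.card X : ℝ) ≠ 0 := Nat.cast_ne_zero.2 Fintype.card_ne_zero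
  have hS : (Fintype.card S : ℝ) ≠ 0 := Nat.cast_ne_zero.2 Fintype.card_ne_zero
  have hX1 : (Fintype.card X : ℝ)⁻¹ ≤ 1 :=
    inv_le_one_of_one_le₀ (Nat.one_le_cast.2 Fintype.card_pos)
  have hS1 : (Fintype.card S : ℝ)⁻¹ ≤ 1 :=
    inv_le_one_of_one_le₀ (Nat.one_le_cast.2 Fintype.card_pos)
  refine ⟨fun _ _ => by positivity, fun _ _ => by positivity, fun _ _ _ _ => by positivity,
    fun _ => ?_, fun _ => ?_, fun _ _ _ => ?_, fun _ _ _ => ?_, fun _ _ _ _ => ?_⟩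
  · simp [hX]
  · simp [hS]
  · simp [hX]
  · simp only [sum_const, card_univ, nsmul_eq_mul]
    field_simp
  · -- `a + b - a b ≤ 1` is `(1 - a) (1 - b) ≥ 0`
    nlinarith [mul_nonneg (sub_nonneg.2 hX1) (sub_nonneg.2 hS1)]

variable {S X Y} [Fintype Y] [DecidableEq S]

lemma sum_offDiag_eq {Q : Y → S → ℝ} {W : S → X → Y → S → ℝ}
    (hQ : ∀ y, ∑ sh, Q y sh = 1) (hWQ : ∀ s sh y, ∑ x, W s x y sh = Q y sh) :
    ∑ s, ∑ x, ∑ y, ∑ sh, (if s = sh then 0 else W s x y sh) =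
      ((Fintype.card Y * (Fintype.card S - 1) : ℕ) : ℝ) := by
  calc ∑ s, ∑ x, ∑ y, ∑ sh, (if s = sh then 0 else W s x y sh)
      = ∑ s, ∑ y, ∑ sh, (if s = sh then 0 else Q y sh) := by
        refine sum_congr rfl fun s _ => ?_
        rw [sum_comm]
        refine sum_congr rfl fun y _ => ?_
        rw [sum_comm]
        refine sum_congr rfl fun sh _ => ?_
        split_ifs <;> simp [hWQ]
    _ = ∑ y, ∑ sh, ∑ s, (if s = sh then 0 else Q y sh) := by
        rw [sum_comm]
        exact sum_congr rfl fun y _ => sum_comm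
    _ = ∑ y, ∑ sh, ((Fintype.card S - 1 : ℕ) : ℝ) * Q y sh := by
        simp [sum_ite, filter_ne', card_erase_of_mem]
    _ = ((Fintype.card Y * (Fintype.card S - 1) : ℕ) : ℝ) := by
        simp [← mul_sum, hQ]

lemma mul_sum_offDiag_le {c W : S → X → Y → S → ℝ} {m : ℝ}
    (hc : ∀ s x y sh, 0 ≤ c s x y sh) (hm : ∀ s x y sh, s ≠ sh → m ≤ c s x y sh)
    (hW : ∀ s x y sh, 0 ≤ W s x y sh) :
    m * ∑ s, ∑ x, ∑ y, ∑ sh, (if s = sh then 0 else W s x y sh) ≤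
      ∑ s, ∑ x, ∑ y, ∑ sh, c s x y sh * W s x y sh := by
  simp only [mul_sum]
  refine sum_le_sum fun s _ => sum_le_sum fun x _ => sum_le_sum fun y _ =>
    sum_le_sum fun sh _ => ?_
  split_ifs with h
  · simpa only [mul_zero] using mul_nonneg (hc s x y sh) (hW s x y sh)
  · exact mul_le_mul_of_nonneg_right (hm s x y sh h) (hW s x y sh)

end LP

theorem lp_optimum_positive_general
    {S X Y : Type*} [Fintype S] [Fintype X] [Fintype Y]
    [Nonempty X] [Nonempty Y] (hS : 2 ≤ Fintype.card S)
    (PS : S → ℝ) (hPSpos : ∀ s, 0 < PS s)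
    (PYX : X → Y → ℝ) (hPYXpos : ∀ x y, 0 < PYX x y)
    (d : S → S → ℝ) (hd0 : ∀ s sh, 0 ≤ d s sh) (hd : ∀ s sh, d s sh = 0 ↔ s = sh)
    (Feas : Set ((S → X → ℝ) × (Y → S → ℝ) × (S → X → Y → S → ℝ)))
    (hFeas : Feas = {p | (∀ s x, 0 ≤ p.1 s x) ∧ (∀ y sh, 0 ≤ p.2.1 y sh) ∧
        (∀ s x y sh, 0 ≤ p.2.2 s x y sh) ∧
        (∀ s, ∑ x, p.1 s x = 1) ∧ (∀ y, ∑ sh, p.2.1 y sh = 1) ∧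
        (∀ s sh y, ∑ x, p.2.2 s x y sh = p.2.1 y sh) ∧
        (∀ x s y, ∑ sh, p.2.2 s x y sh = p.1 s x) ∧
        (∀ s x y sh, p.1 s x + p.2.1 y sh - p.2.2 s x y sh ≤ 1)})
    (obj : ((S → X → ℝ) × (Y → S → ℝ) × (S → X → Y → S → ℝ)) → ℝ)
    (hobj : ∀ p, obj p = ∑ s, ∑ x, ∑ y, ∑ sh, d s sh * PS s * PYX x y * p.2.2 s x y sh) :
    0 < sInf (obj '' Feas) ∧ ∀ p ∈ Feas, obj p ≠ 0 := by
  classical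
  change Feas = lpFeasible S X Y at hFeas
  subst hFeas
  have : Nonempty S := Fintype.card_pos_iff.1 (by omega)
  have hc : ∀ s x y sh, 0 ≤ d s sh * PS s * PYX x y := fun s x y sh =>
    mul_nonneg (mul_nonneg (hd0 s sh) (hPSpos s).le) (hPYXpos x y).le
  obtain ⟨m, hm, hmc⟩ := exists_pos_le_of_pos fun i : S × X × Y × S =>
    d i.1 i.2.2.2 * PS i.1 * PYX i.2.1 i.2.2.1
  have hm_le : ∀ s x y sh, s ≠ sh → m ≤ d s sh * PS s * PYX x y := fun s x y sh hne =>
    hmc (s, x, y, sh) <| mul_pos (mul_pos ((hd0 s sh).lt_of_ne' (by rwa [ne_eq, hd]))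
      (hPSpos s)) (hPYXpos x y)
  set ε := m * ((Fintype.card Y * (Fintype.card S - 1) : ℕ) : ℝ)
  have hε : 0 < ε := mul_pos hm (Nat.cast_pos.2 (Nat.mul_pos Fintype.card_pos (by omega)))
  have hε_le : ∀ p ∈ lpFeasible S X Y, ε ≤ obj p := by
    rintro p ⟨-, -, hW, -, hQ, hWQ, -, -⟩
    have := mul_sum_offDiag_le hc hm_le hW
    rwa [sum_offDiag_eq hQ hWQ, ← hobj] at this
  have hne : (obj '' lpFeasible S X Y).Nonempty :=
    ⟨_, Set.mem_image_of_mem obj (uniform_mem_lpFeasible S X Y)⟩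
  exact ⟨hε.trans_le (le_csInf hne (Set.forall_mem_image.2 hε_le)),
    fun p hp => (hε.trans_le (hε_le p hp)).ne'⟩

theorem lp_optimum_positive
    {S X Y : Type*} [Fintype S] [Fintype X] [Fintype Y]
    [Nonempty S] [Nonempty X] [Nonempty Y] (hS : 2 ≤ Fintype.card S)
    [DecidableEq S]
    (PS : S → ℝ) (hPSpos : ∀ s, 0 < PS s) (hPS1 : ∑ s, PS s = 1)
    (PYX : X → Y → ℝ) (hPYXpos : ∀ x y, 0 < PYX x y) (hPYX1 : ∀ x, ∑ y, PYX x y = 1)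
    (d : S → S → ℝ) (hd0 : ∀ s sh, 0 ≤ d s sh) (hd : ∀ s sh, d s sh = 0 ↔ s = sh)
    (Feas : Set ((S → X → ℝ) × (Y → S → ℝ) × (S → X → Y → S → ℝ)))
    (hFeas : Feas = {p | (∀ s x, 0 ≤ p.1 s x) ∧ (∀ y sh, 0 ≤ p.2.1 y sh) ∧
        (∀ s x y sh, 0 ≤ p.2.2 s x y sh) ∧
        (∀ s, ∑ x, p.1 s x = 1) ∧ (∀ y, ∑ sh, p.2.1 y sh = 1) ∧
        (∀ s sh y, ∑ x, p.2.2 s x y sh = p.2.1 y sh) ∧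
        (∀ x s y, ∑ sh, p.2.2 s x y sh = p.1 s x) ∧
        (∀ s x y sh, p.1 s x + p.2.1 y sh - p.2.2 s x y sh ≤ 1)})
    (obj : ((S → X → ℝ) × (Y → S → ℝ) × (S → X → Y → S → ℝ)) → ℝ)
    (hobj : ∀ p, obj p = ∑ s, ∑ x, ∑ y, ∑ sh, d s sh * PS s * PYX x y * p.2.2 s x y sh) :
    0 < sInf (obj '' Feas) ∧ ∀ p ∈ Feas, obj p ≠ 0 :=
  lp_optimum_positive_general hS PS hPSpos PYX hPYXpos d hd0 hd Feas hFeas obj hobj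
end

section
/- (Lossy source coding converse with improvement term.) Let $\mathcal{S}, \widehat{\mathcal{S}}$ be finite, $P_S$ a probability distribution, $d : \mathcal{S}\times\widehat{\mathcal{S}} \to [0,\infty)$, $\mathbf{d} \ge 0$, $\lambda^* > 0$, and $j : \mathcal{S} \to \mathbb{R}$ satisfying $\sum_s P_S(s)\exp(j(s) + \lambda^*\mathbf{d} - \lambda^* d(s,\widehat{s})) \le 1$ for all $\widehat{s}$. Let $M \ge 1$ be an integer. Then for every encoder $f : \mathcal{S} \to \{1,\dots,M\}$ and decoder $g : \{1,\dots,M\} \to \widehat{\mathcal{S}}$, and every $\gamma \in \mathbb{R}$: $$\sum_s P_S(s)\,\mathbf{1}[d(s, g(f(s))) > \mathbf{d}] \ge \sum_s P_S(s)\,\mathbf{1}[j(s) \ge \gamma + \log M] + \frac{1}{M}\sum_s P_S(s)\exp(j(s) - \gamma)\,\mathbf{1}[j(s) < \log M + \gamma] - \exp(-\gamma).$$ -/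
/-!
Put `T s = ∑ₘ exp (j s + λ𝐝 - λ d(s, g m))`. The tilt inequality summed over the `M` codewords
gives `∑ₛ P(s) T s ≤ M`. When `s` is reproduced within distortion `𝐝`, the term `m = f s` alone
shows `exp (j s) ≤ T s`. The two indicator terms of the bound add up to `min 1 (exp (j s - γ) / M)`,
which is therefore at most `1[d(s, g (f s)) > 𝐝] + exp (-γ) / M * T s`; averaging over `P`
yields the claim.
-/

open Finset Real

lemma ite_add_mul_exp_mul_ite_eq_min {M : ℝ} (hM : 0 < M) (a u : ℝ) :
    (if a + log M ≤ u then (1 : ℝ) else 0) +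
        1 / M * exp (u - a) * (if u < log M + a then (1 : ℝ) else 0) =
      min 1 (exp (u - a) / M) := by
  by_cases h : a + log M ≤ u
  · have hle : M ≤ exp (u - a) := (log_le_iff_le_exp hM).1 (by linarith)
    rw [if_pos h, if_neg (by linarith), min_eq_left ((one_le_div hM).2 hle)]
    ring
  · have hlt : exp (u - a) < M := (lt_log_iff_exp_lt hM).1 (by linarith)
    rw [if_neg h, if_pos (by linarith), min_eq_right ((div_le_one hM).2 hlt.le)]
    ring

lemma exp_le_sum_exp_add_mul_sub_mul {ι : Type*} [Fintype ι] {lam D : ℝ} (hlam : 0 ≤ lam)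
    (x : ℝ) (e : ι → ℝ) {i : ι} (hi : e i ≤ D) :
    exp x ≤ ∑ k, exp (x + lam * D - lam * e k) :=
  calc exp x ≤ exp (x + lam * D - lam * e i) := exp_le_exp.2 (by nlinarith)
    _ ≤ ∑ k, exp (x + lam * D - lam * e k) :=
      single_le_sum (f := fun k => exp (x + lam * D - lam * e k))
        (fun k _ => (exp_pos _).le) (mem_univ i)

lemma min_one_exp_div_le_ite_add {ι : Type*} [Fintype ι] {lam D M : ℝ} (hlam : 0 ≤ lam)
    (hM : 0 < M) (a u : ℝ) (e : ι → ℝ) (i : ι) :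
    min 1 (exp (u - a) / M) ≤
      (if D < e i then (1 : ℝ) else 0) + exp (-a) / M * ∑ k, exp (u + lam * D - lam * e k) := by
  have hrest : 0 ≤ exp (-a) / M * ∑ k, exp (u + lam * D - lam * e k) :=
    mul_nonneg (by positivity) (sum_nonneg fun k _ => (exp_pos _).le)
  by_cases hi : D < e i
  · rw [if_pos hi]
    linarith [min_le_left 1 (exp (u - a) / M)]
  · rw [if_neg hi, zero_add]
    calc min 1 (exp (u - a) / M) ≤ exp (-a) / M * exp u := by
          rw [div_mul_eq_mul_div, ← exp_add, neg_add_eq_sub]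
          exact min_le_right _ _
      _ ≤ _ := by
          gcongr
          exact exp_le_sum_exp_add_mul_sub_mul hlam u e (not_lt.1 hi)

lemma sum_mul_sum_le_card {S ι : Type*} [Fintype S] [Fintype ι] (P : S → ℝ) (w : S → ι → ℝ)
    (hw : ∀ k, ∑ s, P s * w s k ≤ 1) :
    ∑ s, P s * ∑ k, w s k ≤ Fintype.card ι :=
  calc ∑ s, P s * ∑ k, w s k = ∑ k, ∑ s, P s * w s k := by
        simp_rw [mul_sum]
        exact sum_comm
    _ ≤ ∑ _k : ι, (1 : ℝ) := sum_le_sum fun k _ => hw k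
    _ = Fintype.card ι := by simp

theorem lossy_source_coding_converse_improved_general
    {S Sh : Type*} [Fintype S]
    (PS : S → ℝ) (hPS : ∀ s, 0 ≤ PS s)
    (d : S → Sh → ℝ) (D : ℝ)
    (lam : ℝ) (hlam : 0 < lam) (j : S → ℝ)
    (hj : ∀ sh, ∑ s, PS s * Real.exp (j s + lam * D - lam * d s sh) ≤ 1)
    (M : ℕ) (hM : 1 ≤ M)
    (f : S → Fin M) (g : Fin M → Sh) (γ : ℝ) :
    ∑ s, PS s * (if D < d s (g (f s)) then (1:ℝ) else 0) ≥
      (∑ s, PS s * (if γ + Real.log M ≤ j s then (1:ℝ) else 0))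
      + (1 / (M : ℝ)) * ∑ s, PS s * Real.exp (j s - γ) *
          (if j s < Real.log M + γ then (1:ℝ) else 0)
      - Real.exp (-γ) := by
  have hM0 : (0 : ℝ) < M := by exact_mod_cast hM
  set T : S → ℝ := fun s => ∑ m, exp (j s + lam * D - lam * d s (g m))
  have hT : ∑ s, PS s * T s ≤ M := by
    simpa using sum_mul_sum_le_card PS (fun s m => exp (j s + lam * D - lam * d s (g m)))
      fun m => hj (g m)
  rw [ge_iff_le, sub_le_iff_le_add, mul_sum, ← sum_add_distrib]
  calc ∑ s, (PS s * (if γ + log M ≤ j s then (1 : ℝ) else 0) +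
        1 / (M : ℝ) * (PS s * exp (j s - γ) * (if j s < log M + γ then (1 : ℝ) else 0)))
      = ∑ s, PS s * min 1 (exp (j s - γ) / M) := by
        refine sum_congr rfl fun s _ => ?_
        rw [← ite_add_mul_exp_mul_ite_eq_min hM0]
        ring
    _ ≤ ∑ s, PS s * ((if D < d s (g (f s)) then (1 : ℝ) else 0) + exp (-γ) / M * T s) :=
        sum_le_sum fun s _ => mul_le_mul_of_nonneg_left
          (min_one_exp_div_le_ite_add hlam.le hM0 γ (j s) (fun m => d s (g m)) (f s)) (hPS s)
    _ = ∑ s, PS s * (if D < d s (g (f s)) then (1 : ℝ) else 0) +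
          exp (-γ) / M * ∑ s, PS s * T s := by
        rw [mul_sum, ← sum_add_distrib]
        exact sum_congr rfl fun s _ => by ring
    _ ≤ ∑ s, PS s * (if D < d s (g (f s)) then (1 : ℝ) else 0) + exp (-γ) := by
        have : exp (-γ) / M * ∑ s, PS s * T s ≤ exp (-γ) := by
          rw [div_mul_eq_mul_div, div_le_iff₀ hM0]
          gcongr
        linarith

theorem lossy_source_coding_converse_improved
    {S Sh : Type*} [Fintype S] [Fintype Sh]
    (PS : S → ℝ) (hPS : ∀ s, 0 ≤ PS s) (hPS1 : ∑ s, PS s = 1)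
    (d : S → Sh → ℝ) (hd : ∀ s sh, 0 ≤ d s sh) (D : ℝ) (hD : 0 ≤ D)
    (lam : ℝ) (hlam : 0 < lam) (j : S → ℝ)
    (hj : ∀ sh, ∑ s, PS s * Real.exp (j s + lam * D - lam * d s sh) ≤ 1)
    (M : ℕ) (hM : 1 ≤ M)
    (f : S → Fin M) (g : Fin M → Sh) (γ : ℝ) :
    ∑ s, PS s * (if D < d s (g (f s)) then (1:ℝ) else 0) ≥
      (∑ s, PS s * (if γ + Real.log M ≤ j s then (1:ℝ) else 0))
      + (1 / (M : ℝ)) * ∑ s, PS s * Real.exp (j s - γ) *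
          (if j s < Real.log M + γ then (1:ℝ) else 0)
      - Real.exp (-γ) :=
  lossy_source_coding_converse_improved_general PS hPS d D lam hlam j hj M hM f g γ
end

section
/- (General concave-function converse via LP duality.) Let $\mathcal{S}, \mathcal{X}, \mathcal{Y}, \widehat{\mathcal{S}}$ be finite. Suppose $P_S(s) = \bar{P}_S(\delta(s))$ for functions $\delta : \mathcal{S} \to \mathbb{R}$ and $\bar{P}_S : \mathbb{R} \to [0,1]$, and $P_{Y|X}(y|x) = \bar{P}_{Y|X}(\bar{d}(x,y))$ for $\bar{d} : \mathcal{X}\times\mathcal{Y} \to [0,1]$ and $\bar{P}_{Y|X} : [0,1] \to [0,1]$. Let $d : \mathcal{S}\times\widehat{\mathcal{S}} \to [0,1]$ be a distortion. Suppose for each $t \in \mathbb{R}$ we have a concave differentiable function $g_t : [0,1] \to \mathbb{R}$ with $g_t'(m) \le \bar{P}_S(t)\,\bar{P}_{Y|X}(m)$ for all $m \in [0,1]$. Then for every encoder $f : \mathcal{S}\to\mathcal{X}$ and decoder $h : \mathcal{Y}\to\widehat{\mathcal{S}}$: $$\sum_{s,y} P_S(s) P_{Y|X}(y|f(s))\,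 d(s, h(y)) \ge \sum_s \min_{x\in\mathcal{X}} \sum_y \big[-g_{\delta(s)}(\bar{d}(x,y)) + \bar{d}(x,y)\, g_{\delta(s)}'(\bar{d}(x,y))\big] + \sum_y \min_{\widehat{s}\in\widehat{\mathcal{S}}} \sum_s g_{\delta(s)}(d(s,\widehat{s})).$$ -/
/-!
The right-hand side is the value of a feasible solution of the dual of the linear program that
minimises the expected distortion. For every `s, y`, the tangent inequality of the concave
`g = g_{δ s}` at `b = dbar (f s) y`, evaluated at `a = d s (h y)`, together with
`g' b ≤ P_S(s) P_{Y|X}(y | f s)`, gives `g a - g b + b g' b ≤ P_S(s) P_{Y|X}(y | f s) a`.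
Summing over `s, y` and bounding the two resulting sums from below by minimising over
`x = f s` and `sh = h y` gives the claim.
-/

open Finset

theorem ConcaveOn.le_add_mul_sub_of_hasDerivAt {S : Set ℝ} {f : ℝ → ℝ} {f' x y : ℝ}
    (hf : ConcaveOn ℝ S f) (hx : x ∈ S) (hy : y ∈ S) (hf' : HasDerivAt f f' x) :
    f y ≤ f x + f' * (y - x) := by
  rcases lt_trichotomy x y with hxy | rfl | hxy
  · have hslope := hf.slope_le_of_hasDerivAt hx hy hxy hf'
    rw [slope_def_field, div_le_iff₀ (sub_pos.mpr hxy)] at hslope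
    linarith
  · simp
  · have hslope := hf.le_slope_of_hasDerivAt hy hx hxy hf'
    rw [slope_def_field, le_div_iff₀ (sub_pos.mpr hxy)] at hslope
    linarith

theorem ConcaveOn.add_neg_add_mul_le_mul {S : Set ℝ} {g : ℝ → ℝ} {g' p a b : ℝ}
    (hg : ConcaveOn ℝ S g) (ha : a ∈ S) (hb : b ∈ S) (ha₀ : 0 ≤ a)
    (hg' : HasDerivAt g g' b) (hp : g' ≤ p) :
    g a + (-g b + b * g') ≤ p * a := by
  have htangent := hg.le_add_mul_sub_of_hasDerivAt hb ha hg'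
  nlinarith [mul_le_mul_of_nonneg_right hp ha₀]

theorem sum_inf'_add_sum_inf'_le {S X Y Sh β : Type*} [Fintype S] [Fintype X] [Fintype Y]
    [Fintype Sh] [Nonempty X] [Nonempty Sh]
    [AddCommMonoid β] [LinearOrder β] [IsOrderedAddMonoid β]
    (a : S → Sh → β) (b : S → X → Y → β) (c : S → Y → β) (f : S → X) (h : Y → Sh)
    (hfeas : ∀ s y, a s (h y) + b s (f s) y ≤ c s y) :
    (∑ s, univ.inf' univ_nonempty fun x => ∑ y, b s x y)
      + ∑ _y : Y, univ.inf' univ_nonempty (fun sh => ∑ s, a s sh) ≤ ∑ s, ∑ y, c s y := by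
  calc (∑ s, univ.inf' univ_nonempty fun x => ∑ y, b s x y)
        + ∑ _y : Y, univ.inf' univ_nonempty (fun sh => ∑ s, a s sh)
      ≤ (∑ s, ∑ y, b s (f s) y) + ∑ y, ∑ s, a s (h y) := by
        gcongr with s _ y _
        · exact inf'_le _ (mem_univ (f s))
        · exact inf'_le _ (mem_univ (h y))
    _ = ∑ s, ∑ y, (a s (h y) + b s (f s) y) := by
        rw [sum_comm (f := fun y s => a s (h y)), ← sum_add_distrib]
        simp only [← sum_add_distrib, add_comm]
    _ ≤ ∑ s, ∑ y, c s y := by gcongr with s _ y _; exact hfeas s y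

theorem general_concave_converse_general
    {S X Y Sh : Type*} [Fintype S] [Fintype X] [Fintype Y] [Fintype Sh]
    [Nonempty X] [Nonempty Sh]
    (δ : S → ℝ) (PbarS : ℝ → ℝ)
    (PS : S → ℝ) (hPS : ∀ s, PS s = PbarS (δ s))
    (dbar : X → Y → ℝ) (hdbar : ∀ x y, dbar x y ∈ Set.Icc (0:ℝ) 1)
    (PbarYX : ℝ → ℝ)
    (PYX : X → Y → ℝ) (hPYX : ∀ x y, PYX x y = PbarYX (dbar x y))
    (d : S → Sh → ℝ) (hd : ∀ s sh, d s sh ∈ Set.Icc (0:ℝ) 1)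
    (g : ℝ → ℝ → ℝ) (g' : ℝ → ℝ → ℝ)
    (hconc : ∀ t, ConcaveOn ℝ (Set.Icc (0:ℝ) 1) (g t))
    (hderiv : ∀ t, ∀ m ∈ Set.Icc (0:ℝ) 1, HasDerivAt (g t) (g' t m) m)
    (hgrad : ∀ t, ∀ m ∈ Set.Icc (0:ℝ) 1, g' t m ≤ PbarS t * PbarYX m)
    (f : S → X) (h : Y → Sh) :
    ∑ s, ∑ y, PS s * PYX (f s) y * d s (h y) ≥
      (∑ s, (Finset.univ : Finset X).inf' Finset.univ_nonempty fun x =>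
          ∑ y, (-(g (δ s) (dbar x y)) + dbar x y * g' (δ s) (dbar x y)))
      + ∑ _y : Y, (Finset.univ : Finset Sh).inf' Finset.univ_nonempty fun sh =>
          ∑ s, g (δ s) (d s sh) := by
  refine sum_inf'_add_sum_inf'_le _ _ _ f h fun s y => ?_
  have hb := hdbar (f s) y
  have hgrad_le : g' (δ s) (dbar (f s) y) ≤ PS s * PYX (f s) y := by
    rw [hPS, hPYX]
    exact hgrad _ _ hb
  exact (hconc (δ s)).add_neg_add_mul_le_mul (hd s (h y)) hb (hd s (h y)).1
    (hderiv _ _ hb) hgrad_le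

theorem general_concave_converse
    {S X Y Sh : Type*} [Fintype S] [Fintype X] [Fintype Y] [Fintype Sh]
    [Nonempty X] [Nonempty Sh]
    (δ : S → ℝ) (PbarS : ℝ → ℝ) (hPbarS : ∀ t, PbarS t ∈ Set.Icc (0:ℝ) 1)
    (PS : S → ℝ) (hPS : ∀ s, PS s = PbarS (δ s)) (hPS1 : ∑ s, PS s = 1)
    (dbar : X → Y → ℝ) (hdbar : ∀ x y, dbar x y ∈ Set.Icc (0:ℝ) 1)
    (PbarYX : ℝ → ℝ) (hPbarYX : ∀ m, PbarYX m ∈ Set.Icc (0:ℝ) 1)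
    (PYX : X → Y → ℝ) (hPYX : ∀ x y, PYX x y = PbarYX (dbar x y))
    (hPYX1 : ∀ x, ∑ y, PYX x y = 1)
    (d : S → Sh → ℝ) (hd : ∀ s sh, d s sh ∈ Set.Icc (0:ℝ) 1)
    (g : ℝ → ℝ → ℝ) (g' : ℝ → ℝ → ℝ)
    (hconc : ∀ t, ConcaveOn ℝ (Set.Icc (0:ℝ) 1) (g t))
    (hderiv : ∀ t, ∀ m ∈ Set.Icc (0:ℝ) 1, HasDerivAt (g t) (g' t m) m)
    (hgrad : ∀ t, ∀ m ∈ Set.Icc (0:ℝ) 1, g' t m ≤ PbarS t * PbarYX m)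
    (f : S → X) (h : Y → Sh) :
    ∑ s, ∑ y, PS s * PYX (f s) y * d s (h y) ≥
      (∑ s, (Finset.univ : Finset X).inf' Finset.univ_nonempty fun x =>
          ∑ y, (-(g (δ s) (dbar x y)) + dbar x y * g' (δ s) (dbar x y)))
      + ∑ _y : Y, (Finset.univ : Finset Sh).inf' Finset.univ_nonempty fun sh =>
          ∑ s, g (δ s) (d s sh) :=
  general_concave_converse_general δ PbarS PS hPS dbar hdbar PbarYX PYX hPYX d hd g g' hconc hderiv
    hgrad f h
end

section
/- (Tightness for the $q$-ary uniform source over the $q$-ary symmetric channel.) Let $q \ge 2$, $n \ge 1$, and $0 < \epsilon < 1 - 1/q$. Let $\mathcal{S} = \mathcal{X} = \mathcal{Y} = \widehat{\mathcal{S}} = \mathbb{F}_q^n$ (strings of length $n$ over a $q$-element alphabet), $P_S(s) = q^{-n}$, and let the channel be memoryless $q$-ary symmetric: $P_{Y|X}(y|x) = \prod_{i=1}^n [\frac{\epsilon}{q-1}\mathbf{1}(y_i \ne x_i) + (1-\epsilon)\mathbf{1}(y_i = x_i)]$. Let the loss be the average symbol-wise Hamming distortion $\kappa(s,\widehat{s})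 = \frac{1}{n}\sum_{i=1}^n \mathbf{1}[s_i \ne \widehat{s}_i]$. Then the minimum over all encoder/decoder pairs $(f,g)$ of the expected distortion $\sum_{s,y} q^{-n} P_{Y|X}(y|f(s))\,\kappa(s, g(y))$ equals $\epsilon$, and it is achieved by uncoded transmission $f = g = \mathrm{id}$. -/
/-!
Let `W` be the `n`-letter channel and `d` the Hamming distance. For a scheme `(f, g)` compare
the joint law `p (s, y) = W (f s) y` of source word and channel output with the law
`r (s, y) = W (g y) s` obtained by feeding the decoded word back into the channel. Both have
total mass `q ^ n`, so Gibbs' inequality gives `∑ p log r ≤ ∑ p log p`. Since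
`log W x y = n log (1 - ε) + D d(x, y)` with `D = log (ε / (q - 1)) - log (1 - ε)`, and `D < 0`
exactly when `ε < 1 - 1 / q`, this says `∑ p d(s, g y) ≥ ∑ p d(f s, y)`. The right side is the
Hamming risk of uncoded transmission, `q ^ n n ε`, as each symbol is flipped with probability `ε`.
-/

open Finset Real

theorem Real.mul_log_le_mul_log_add_sub {p r : ℝ} (hp : 0 ≤ p) (hr : 0 < r) :
    p * log r ≤ p * log p + (r - p) := by
  rcases hp.eq_or_lt with rfl | hp
  · simpa using hr.le
  · have h := mul_le_mul_of_nonneg_left (log_le_sub_one_of_pos (div_pos hr hp)) hp.le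
    rw [log_div hr.ne' hp.ne', mul_sub, mul_sub, mul_div_cancel₀ _ hp.ne', mul_one] at h
    linarith

theorem Fintype.sum_mul_log_le_sum_mul_log {β : Type*} [Fintype β] (p r : β → ℝ)
    (hp : ∀ b, 0 ≤ p b) (hr : ∀ b, 0 < r b) (hpr : ∑ b, p b = ∑ b, r b) :
    ∑ b, p b * log (r b) ≤ ∑ b, p b * log (p b) := by
  have h := sum_le_sum fun b (_ : b ∈ univ) => mul_log_le_mul_log_add_sub (hp b) (hr b)
  rw [sum_add_distrib, sum_sub_distrib, hpr, sub_self, add_zero] at h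
  exact h

theorem Fintype.sum_prod_mul_apply_of_sum_eq_one {ι α R : Type*} [Fintype ι] [DecidableEq ι]
    [Fintype α] [CommSemiring R] (v : ι → α → R) (hv : ∀ j, ∑ b, v j b = 1) (i : ι)
    (φ : α → R) :
    ∑ y : ι → α, (∏ j, v j (y j)) * φ (y i) = ∑ b, v i b * φ b := by
  have hsplit : ∀ y : ι → α,
      (∏ j, v j (y j)) * φ (y i) = ∏ j, v j (y j) * if j = i then φ (y j) else 1 := by
    intro y
    rw [prod_mul_distrib, Fintype.prod_ite_eq']
  simp_rw [hsplit]
  rw [← Fintype.prod_sum (fun j b => v j b * if j = i then φ b else 1),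
    prod_eq_single_of_mem i (mem_univ i)]
  · simp
  · intro j _ hj
    simp [hj, hv]

theorem Fintype.sum_ite_ne {α : Type*} [Fintype α] [DecidableEq α] [Nonempty α] (a : α)
    (c d : ℝ) : ∑ b : α, (if b ≠ a then c else d) = (Fintype.card α - 1) * c + d := by
  rw [sum_ite, sum_const, sum_const, filter_ne', card_erase_of_mem (mem_univ a)]
  simp [filter_eq', Nat.cast_sub Fintype.card_pos]

theorem hammingDist_eq_sum_ite {ι : Type*} {β : ι → Type*} [Fintype ι]
    [∀ i, DecidableEq (β i)]
    (x y : ∀ i, β i) : (hammingDist x y : ℝ) = ∑ i, if x i ≠ y i then 1 else 0 := by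
  rw [sum_boole, hammingDist]

namespace SymmetricChannel

variable {α ι : Type*} [Fintype α] {ε : ℝ}

theorem div_card_sub_one_lt_one_sub (hq : 1 < Fintype.card α)
    (hε : ε < 1 - 1 / Fintype.card α) : ε / (Fintype.card α - 1) < 1 - ε := by
  have hq' : (1 : ℝ) < Fintype.card α := by exact_mod_cast hq
  rw [div_lt_iff₀ (by linarith)]
  have h := mul_lt_mul_of_pos_right hε (by linarith : (0:ℝ) < Fintype.card α)
  rw [sub_mul, one_div_mul_cancel (by linarith)] at h
  nlinarith

variable [DecidableEq α]

noncomputable def kernel (ε : ℝ) (a b : α) : ℝ :=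
  if b ≠ a then ε / (Fintype.card α - 1) else 1 - ε

theorem kernel_pos (hq : 1 < Fintype.card α) (hε0 : 0 < ε) (hε1 : ε < 1) (a b : α) :
    0 < kernel ε a b := by
  have hq' : (1 : ℝ) < Fintype.card α := by exact_mod_cast hq
  unfold kernel
  split_ifs
  · exact div_pos hε0 (by linarith)
  · linarith

theorem sum_kernel (hq : 1 < Fintype.card α) (a : α) : ∑ b, kernel ε a b = 1 := by
  have hq' : (Fintype.card α : ℝ) - 1 ≠ 0 := by
    rw [sub_ne_zero]; exact_mod_cast hq.ne'
  have : Nonempty α := ⟨a⟩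
  simp only [kernel]
  rw [Fintype.sum_ite_ne, mul_div_cancel₀ _ hq']
  ring

theorem sum_kernel_mul_ne (hq : 1 < Fintype.card α) (a : α) :
    ∑ b, kernel ε a b * (if a ≠ b then 1 else 0) = ε := by
  have hq' : (Fintype.card α : ℝ) - 1 ≠ 0 := by
    rw [sub_ne_zero]; exact_mod_cast hq.ne'
  have : Nonempty α := ⟨a⟩
  have h : ∀ b, kernel ε a b * (if a ≠ b then 1 else 0) =
      if b ≠ a then ε / (Fintype.card α - 1) else 0 := by
    intro b
    by_cases hb : b = a <;> simp [kernel, hb, Ne.symm]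
  rw [sum_congr rfl fun b _ => h b, Fintype.sum_ite_ne, mul_div_cancel₀ _ hq', add_zero]

theorem log_kernel (a b : α) :
    log (kernel ε a b) =
      log (1 - ε) +
        (log (ε / (Fintype.card α - 1)) - log (1 - ε)) * if a ≠ b then 1 else 0 := by
  by_cases hb : b = a <;> simp [kernel, hb, Ne.symm]

variable [Fintype ι]

noncomputable def prodKernel (ε : ℝ) (x y : ι → α) : ℝ :=
  ∏ i, kernel ε (x i) (y i)

theorem prodKernel_pos (hq : 1 < Fintype.card α) (hε0 : 0 < ε) (hε1 : ε < 1)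
    (x y : ι → α) :
    0 < prodKernel ε x y :=
  prod_pos fun _ _ => kernel_pos hq hε0 hε1 _ _

theorem log_prodKernel (hq : 1 < Fintype.card α) (hε0 : 0 < ε) (hε1 : ε < 1)
    (x y : ι → α) :
    log (prodKernel ε x y) = Fintype.card ι * log (1 - ε) +
      (log (ε / (Fintype.card α - 1)) - log (1 - ε)) * hammingDist x y := by
  unfold prodKernel
  rw [log_prod fun i _ => (kernel_pos hq hε0 hε1 _ _).ne']
  simp_rw [log_kernel, sum_add_distrib, ← mul_sum, ← hammingDist_eq_sum_ite]
  simp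

variable [DecidableEq ι]

noncomputable def hammingRisk (ε : ℝ) (f g : (ι → α) → ι → α) : ℝ :=
  ∑ s, ∑ y, prodKernel ε (f s) y * hammingDist s (g y)

theorem sum_prodKernel (hq : 1 < Fintype.card α) (x : ι → α) :
    ∑ y, prodKernel ε x y = 1 := by
  unfold prodKernel
  rw [← Fintype.prod_sum (fun i b => kernel ε (x i) b)]
  exact prod_eq_one fun i _ => sum_kernel hq (x i)

theorem sum_prodKernel_mul_hammingDist (hq : 1 < Fintype.card α) (x : ι → α) :
    ∑ y, prodKernel ε x y * hammingDist x y = Fintype.card ι * ε := by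
  simp_rw [hammingDist_eq_sum_ite, mul_sum]
  rw [sum_comm]
  have hmarg (i : ι) := Fintype.sum_prod_mul_apply_of_sum_eq_one _
    (fun j => sum_kernel (ε := ε) hq (x j)) i fun b => if x i ≠ b then 1 else 0
  simp_rw [prodKernel, hmarg, sum_kernel_mul_ne hq, sum_const, card_univ, nsmul_eq_mul]

theorem hammingRisk_id (hq : 1 < Fintype.card α) :
    hammingRisk ε (@id (ι → α)) id = Fintype.card (ι → α) * (Fintype.card ι * ε) := by
  simp [hammingRisk, sum_prodKernel_mul_hammingDist hq]

theorem hammingRisk_id_le (hq : 1 < Fintype.card α) (hε0 : 0 < ε)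
    (hε : ε < 1 - 1 / Fintype.card α) (f g : (ι → α) → ι → α) :
    hammingRisk ε (@id (ι → α)) id ≤ hammingRisk ε f g := by
  have hq' : (1 : ℝ) < Fintype.card α := by exact_mod_cast hq
  have hε1 : ε < 1 := hε.trans (sub_lt_self 1 (one_div_pos.2 (by linarith)))
  have hD : log (ε / (Fintype.card α - 1)) - log (1 - ε) < 0 :=
    sub_neg.2 (log_lt_log (div_pos hε0 (by linarith)) (div_card_sub_one_lt_one_sub hq hε))
  have gibbs := Fintype.sum_mul_log_le_sum_mul_log
    (fun z : (ι → α) × (ι → α) => prodKernel ε (f z.1) z.2)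
    (fun z => prodKernel ε (g z.2) z.1)
    (fun _ => (prodKernel_pos hq hε0 hε1 _ _).le) (fun _ => prodKernel_pos hq hε0 hε1 _ _) (by
      simp only [Fintype.sum_prod_type]
      conv_rhs => rw [sum_comm]
      simp [sum_prodKernel hq])
  simp only [log_prodKernel hq hε0 hε1, mul_add, sum_add_distrib, add_le_add_iff_left,
    mul_left_comm _ (log (ε / (Fintype.card α - 1)) - log (1 - ε)), ← mul_sum] at gibbs
  calc
    _ = ∑ z : (ι → α) × (ι → α), prodKernel ε (f z.1) z.2 * hammingDist (f z.1) z.2 := by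
      rw [hammingRisk_id hq, Fintype.sum_prod_type]
      simp_rw [sum_prodKernel_mul_hammingDist hq, sum_const, card_univ, nsmul_eq_mul]
    _ ≤ ∑ z : (ι → α) × (ι → α), prodKernel ε (f z.1) z.2 * hammingDist (g z.2) z.1 :=
      (mul_le_mul_left_of_neg hD).1 gibbs
    _ = hammingRisk ε f g := by
      rw [Fintype.sum_prod_type, hammingRisk]
      simp only [hammingDist_comm (g _)]

end SymmetricChannel

open SymmetricChannel in
theorem qary_uniform_symmetric_tightness
    (q n : ℕ) (hq : 2 ≤ q) (hn : 1 ≤ n)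
    (ε : ℝ) (hε0 : 0 < ε) (hε : ε < 1 - 1/(q:ℝ))
    (PYX : (Fin n → Fin q) → (Fin n → Fin q) → ℝ)
    (hPYX : ∀ x y, PYX x y =
      ∏ i : Fin n, (if y i ≠ x i then ε / ((q:ℝ) - 1) else 1 - ε))
    (κ : (Fin n → Fin q) → (Fin n → Fin q) → ℝ)
    (hκ : ∀ s sh, κ s sh =
      (1 / (n:ℝ)) * ∑ i : Fin n, (if s i ≠ sh i then (1:ℝ) else 0))
    (obj : ((Fin n → Fin q) → (Fin n → Fin q)) →
           ((Fin n → Fin q) → (Fin n → Fin q)) → ℝ)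
    (hobj : ∀ f g, obj f g =
      ∑ s : Fin n → Fin q, ∑ y : Fin n → Fin q,
        ((q:ℝ) ^ n)⁻¹ * PYX (f s) y * κ s (g y)) :
    IsLeast { v : ℝ | ∃ f g, v = obj f g } ε ∧ obj id id = ε := by
  have hq' : 1 < Fintype.card (Fin q) := by simp; omega
  have hobj_eq : ∀ f g, obj f g = ((q:ℝ) ^ n)⁻¹ * (n:ℝ)⁻¹ * hammingRisk ε f g := by
    intro f g
    simp only [hobj, hPYX, hκ, hammingRisk, prodKernel, kernel, ← hammingDist_eq_sum_ite,
      Fintype.card_fin, mul_sum]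
    exact sum_congr rfl fun s _ => sum_congr rfl fun y _ => by ring
  have hobj_id : obj id id = ε := by
    have hn' : (n : ℝ) ≠ 0 := by exact_mod_cast (by omega : n ≠ 0)
    rw [hobj_eq, hammingRisk_id hq', Fintype.card_fun, Fintype.card_fin, Fintype.card_fin,
      Nat.cast_pow]
    field_simp
  refine ⟨⟨⟨id, id, hobj_id.symm⟩, ?_⟩, hobj_id⟩
  rintro v ⟨f, g, rfl⟩
  rw [← hobj_id, hobj_eq, hobj_eq]
  gcongr
  exact hammingRisk_id_le hq' hε0 (by simpa using hε) f g
end
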